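/- arXiv:1409.8455 — 6 statements merged into one kernel-verified Lean document; each statement's English description precedes it below -/
import Mathlib

section
/- In an alternative (not necessarily associative) ring, the subring generated by any two elements is associative. -/
namespace ArtinAux

variable {A : Type*} [NonUnitalNonAssocRing A]

/-- The associator. -/
def asc (x y z : A) : A := x * y * z - x * (y * z)

theorem asc_add1 (x x' y z : A) : asc (x + x') y z = asc x y z + asc x' y z := by
  simp only [asc, add_mul, mul_add]; abel

theorem asc_add2 (x y y' z : A) : asc x (y + y') z = asc x y z + asc x y' z := by
  simp only [asc, add_mul, mul_add]; abel

theorem asc_add3 (x y z z' : A) : asc x y (z + z') = asc x y z + asc x y z' := by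
  simp only [asc, add_mul, mul_add]; abel

theorem asc_neg1 (x y z : A) : asc (-x) y z = - asc x y z := by
  simp only [asc, neg_mul, mul_neg]; abel

theorem asc_neg2 (x y z : A) : asc x (-y) z = - asc x y z := by
  simp only [asc, neg_mul, mul_neg]; abel

theorem asc_neg3 (x y z : A) : asc x y (-z) = - asc x y z := by
  simp only [asc, neg_mul, mul_neg]; abel

theorem asc_zero1 (y z : A) : asc 0 y z = 0 := by simp [asc]

theorem asc_zero2 (y z : A) : asc y 0 z = 0 := by simp [asc]

theorem asc_zero3 (y z : A) : asc y z 0 = 0 := by simp [asc]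

section Alt

variable (h1 : ∀ x y : A, (x * x) * y = x * (x * y))
variable (h2 : ∀ x y : A, (y * x) * x = y * (x * x))

include h1 h2

theorem z12 (x y : A) : asc x x y = 0 := sub_eq_zero.mpr (h1 x y)

theorem z23 (y x : A) : asc y x x = 0 := sub_eq_zero.mpr (h2 x y)

theorem sk1 (x y z : A) : asc x y z + asc y x z = 0 := by
  have h := z12 h1 h2 (x + y) z
  rw [asc_add1, asc_add2, asc_add2, z12 h1 h2, z12 h1 h2] at h
  simpa using h

theorem sk3 (x y z : A) : asc x y z + asc x z y = 0 := by
  have h := z23 h1 h2 x (y + z)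
  rw [asc_add2, asc_add3, asc_add3, z23 h1 h2, z23 h1 h2] at h
  simpa using h

theorem sk1' (x y z : A) : asc x y z = - asc y x z :=
  eq_neg_of_add_eq_zero_left (sk1 h1 h2 x y z)

theorem sk3' (x y z : A) : asc x y z = - asc x z y :=
  eq_neg_of_add_eq_zero_left (sk3 h1 h2 x y z)

theorem cyc (x y z : A) : asc x y z = asc y z x := by
  rw [sk1' h1 h2 x y z, sk3' h1 h2 y x z, neg_neg]

theorem swap13 (x y z : A) : asc x y z = - asc z y x := by
  rw [sk1' h1 h2 x y z, cyc h1 h2 y x z, cyc h1 h2 x z y]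

/-- The key Moufang-type identity for alternative rings. -/
theorem M2 (x y z : A) : asc x z (y * x) = x * asc z y x := by
  have E : asc x z (y * x) - x * asc z y x = (asc x x (y * z) + asc x (y * z) x) + (-(asc x x (y * z))) + (-(asc x x (y * z))) + (-(asc x x (y * z))) + (asc x x (z * y) + asc x (z * y) x) + (-(asc x x (z * y))) + (-(asc x x (z * y))) + (-(asc x x (z * y))) + (-(asc x y (x * z) + asc y x (x * z))) + (asc x y (x * z) + asc x (x * z) y) + (-(asc x y (z * x) + asc x (z * x) y)) + (-(asc x z (x * y) + asc z x (x * y))) + (asc x z (x * y) + asc x (x * y) z) + (asc x z (x * y) + asc x (x * y) z) + (asc x (x * z) y + asc (x * z) x y) + (asc y x (x * z) + asc y (x * z) x) + (-(asc y z (x * x) + asc z y (x * x))) + (-(asc y z (x * x) + asc z y (x * x))) + (asc y z (x * x) + asc y (x * x) z) + (asc y z (x * x) + asc y (x * x) z) + (-(asc y (x * x) z + asc (x * x) y z)) + (-(asc y (x * x) z + asc (x * x) y z)) + (-(asc y (x * z) x + asc (x * z) y x)) + (asc z x (x * y) + asc z (x * y) x) + (asc z y (x * x) + asc z (x * x) y)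 + (asc z y (x * x) + asc z (x * x) y) + (-(asc z (x * x) y + asc (x * x) z y)) + (-(asc z (x * x) y + asc (x * x) z y)) + (-(asc z (x * y) x + asc (x * y) z x)) + (-(x * (asc x y z + asc y x z))) + (x * (asc x y z + asc x z y)) + (x * (asc x y z + asc x z y)) + (x * (asc x y z + asc x z y)) + ((asc x y z + asc x z y) * x) + (-(x * (asc x z y + asc z x y))) + (x * (asc y x z + asc y z x)) + (-((asc x x z + asc x z x) * y)) + ((asc x x z) * y) + ((asc x x z) * y) + ((asc x x z) * y) + ((asc x x y) * z) + ((asc x x y) * z) := by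
    simp only [asc, mul_add, add_mul, mul_sub, sub_mul, mul_neg, neg_mul]
    abel
  have E0 : asc x z (y * x) - x * asc z y x = 0 := by
    rw [E, show (asc x x (y * z) + asc x (y * z) x) = (0:A) from sk3 h1 h2 x x (y * z), show (asc x x (z * y) + asc x (z * y) x) = (0:A) from sk3 h1 h2 x x (z * y), show (asc x y (x * z) + asc y x (x * z)) = (0:A) from sk1 h1 h2 x y (x * z), show (asc x y (x * z) + asc x (x * z) y) = (0:A) from sk3 h1 h2 x y (x * z), show (asc x y (z * x) + asc x (z * x) y) = (0:A) from sk3 h1 h2 x y (z * x), show (asc x z (x * y) + asc z x (x * y)) = (0:A) from sk1 h1 h2 x z (x * y), show (asc x z (x * y) + asc x (x * y) z) = (0:A) from sk3 h1 h2 x z (x * y), show (asc x (x * z) y + asc (x * z) x y) = (0:A) from sk1 h1 h2 x (x * z) y, show (asc y x (x * z) + asc y (x * z) x) = (0:A) from sk3 h1 h2 y x (x * z), show (asc y z (x * x) + asc z y (x * x)) = (0:A) from sk1 h1 h2 y z (x * x), show (asc y z (x * x) + asc y (x * x) z) = (0:A) from sk3 h1 h2 y z (x * x), show (asc y (x * x)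 z + asc (x * x) y z) = (0:A) from sk1 h1 h2 y (x * x) z, show (asc y (x * z) x + asc (x * z) y x) = (0:A) from sk1 h1 h2 y (x * z) x, show (asc z x (x * y) + asc z (x * y) x) = (0:A) from sk3 h1 h2 z x (x * y), show (asc z y (x * x) + asc z (x * x) y) = (0:A) from sk3 h1 h2 z y (x * x), show (asc z (x * x) y + asc (x * x) z y) = (0:A) from sk1 h1 h2 z (x * x) y, show (asc z (x * y) x + asc (x * y) z x) = (0:A) from sk1 h1 h2 z (x * y) x, show (asc x y z + asc y x z) = (0:A) from sk1 h1 h2 x y z, show (asc x y z + asc x z y) = (0:A) from sk3 h1 h2 x y z, show (asc x z y + asc z x y) = (0:A) from sk1 h1 h2 x z y, show (asc y x z + asc y z x) = (0:A) from sk3 h1 h2 y x z, show (asc x x z + asc x z x) = (0:A) from sk3 h1 h2 x x z, show (asc x x (y * z)) = (0:A) from z12 h1 h2 x (y * z), show (asc x x (z * y)) = (0:A) from z12 h1 h2 x (z * y), show (asc x x z) = (0:A) from z12 h1 h2 x z, show (asc x x y) = (0:A) from z12 h1 h2 x y]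
    simp
  exact sub_eq_zero.mp E0

theorem L2 (X T y z : A) :
    asc X z (y * T) + asc T z (y * X) = X * asc z y T + T * asc z y X := by
  have hXT := M2 h1 h2 (X + T) y z
  have hX := M2 h1 h2 X y z
  have hT := M2 h1 h2 T y z
  have e : (asc X z (y * T) + asc T z (y * X)) - (X * asc z y T + T * asc z y X)
      = (asc (X + T) z (y * (X + T)) - (X + T) * asc z y (X + T))
        - (asc X z (y * X) - X * asc z y X) - (asc T z (y * T) - T * asc z y T) := by
    simp only [asc, mul_add, add_mul, mul_sub, sub_mul]
    abel
  have e0 : (asc X z (y * T) + asc T z (y * X)) - (X * asc z y T + T * asc z y X) = 0 := by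
    rw [e, sub_eq_zero.mpr hXT, sub_eq_zero.mpr hX, sub_eq_zero.mpr hT]
    simp
  exact sub_eq_zero.mp e0


/-- Monomials in `a` and `b` with a degree bound witness. -/
inductive IsMon (a b : A) : A → ℕ → Prop
  | base_a : IsMon a b a 1
  | base_b : IsMon a b b 1
  | mul {x m y n} : IsMon a b x m → IsMon a b y n → IsMon a b (x * y) (m + n)

omit h1 h2 in
theorem IsMon.pos {a b : A} {p : A} {d : ℕ} (h : IsMon a b p d) : 1 ≤ d := by
  induction h <;> omega

omit h1 h2 in
theorem IsMon.letter {a b x : A} (h : x = a ∨ x = b) : IsMon a b x 1 := by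
  rcases h with h | h <;> rw [h]
  · exact IsMon.base_a
  · exact IsMon.base_b

/-- Peeling off the last letter of a monomial, assuming all associators of smaller
total degree vanish. -/
theorem peel {a b : A} {n : ℕ}
    (IH : ∀ p dp q dq r dr, IsMon a b p dp → IsMon a b q dq → IsMon a b r dr →
      dp + dq + dr < n → asc p q r = 0) :
    ∀ {p : A} {d : ℕ}, IsMon a b p d → d < n →
      ∃ x, (x = a ∨ x = b) ∧
        (p = x ∨ ∃ m e, IsMon a b m e ∧ e + 1 ≤ d ∧ p = m * x) := by
  intro p d h
  induction h with
  | base_a => exact fun _ => ⟨a, Or.inl rfl, Or.inl rfl⟩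
  | base_b => exact fun _ => ⟨b, Or.inr rfl, Or.inl rfl⟩
  | @mul X m Y nn hX hY ihX ihY =>
    intro hlt
    obtain ⟨xL, hab, hcase⟩ := ihY (by have := hX.pos; omega)
    refine ⟨xL, hab, Or.inr ?_⟩
    rcases hcase with hY' | ⟨m2, e, hm2, he, hY'⟩
    · exact ⟨X, m, hX, by have := hY.pos; omega, by rw [hY']⟩
    · have hz : asc X m2 xL = 0 :=
        IH X m m2 e xL 1 hX hm2 (IsMon.letter hab) (by omega)
      refine ⟨X * m2, m + e, hX.mul hm2, by omega, ?_⟩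
      rw [hY', ← sub_eq_zero.mp hz]  -- ?

theorem G1 {a b : A} {n : ℕ}
    (IH : ∀ p dp q dq r dr, IsMon a b p dp → IsMon a b q dq → IsMon a b r dr →
      dp + dq + dr < n → asc p q r = 0)
    {m r x : A} {e dr : ℕ}
    (hm : IsMon a b m e) (hr : IsMon a b r dr) (hx : x = a ∨ x = b)
    (hb : e + 1 + 1 + dr ≤ n) : asc (m * x) x r = 0 := by
  have hxm : IsMon a b x 1 := IsMon.letter hx
  have l2 := L2 h1 h2 x r m x
  -- l2 : asc x x (m * r) + asc r x (m * x) = x * asc x m r + r * asc x m x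
  rw [z12 h1 h2, IH x 1 m e r dr hxm hm hr (by have := hr.pos; omega),
    IH x 1 m e x 1 hxm hm hxm (by have := hr.pos; omega), zero_add, mul_zero, mul_zero,
    add_zero] at l2
  rw [swap13 h1 h2, l2, neg_zero]

theorem core {a b : A} {n : ℕ}
    (IH : ∀ p dp q dq r dr, IsMon a b p dp → IsMon a b q dq → IsMon a b r dr →
      dp + dq + dr < n → asc p q r = 0)
    {p q r x : A} {dp dq dr : ℕ}
    (hp : IsMon a b p dp) (hq : IsMon a b q dq) (hr : IsMon a b r dr)
    (hx : x = a ∨ x = b)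
    (hsum : dp + dq + dr ≤ n)
    (hpx : p = x ∨ ∃ m e, IsMon a b m e ∧ e + 1 ≤ dp ∧ p = m * x)
    (hqx : q = x ∨ ∃ m e, IsMon a b m e ∧ e + 1 ≤ dq ∧ q = m * x) :
    asc p q r = 0 := by
  have hxm : IsMon a b x 1 := IsMon.letter hx
  have hppos := hp.pos; have hqpos := hq.pos; have hrpos := hr.pos
  rcases hpx with hp' | ⟨mp, ep, hmp, hep, hp'⟩
  · rcases hqx with hq' | ⟨mq, eq', hmq, heq, hq'⟩
    · rw [hp', hq', z12 h1 h2]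
    · rw [hp', hq', sk1' h1 h2, G1 h1 h2 IH hmq hr hx (by omega), neg_zero]
  · rcases hqx with hq' | ⟨mq, eq', hmq, heq, hq'⟩
    · rw [hp', hq']
      exact G1 h1 h2 IH hmp hr hx (by omega)
    · -- both composite
      have hpm : IsMon a b (mp * x) (ep + 1) := hmp.mul hxm
      have l2 := L2 h1 h2 x r mq (mp * x)
      -- l2 : asc x (mp*x) (mq*r) + asc r (mp*x) (mq*x)
      --        = x * asc (mp*x) mq r + r * asc (mp*x) mq x
      rw [IH (mp*x) (ep+1) mq eq' r dr hpm hmq hr (by omega),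
        IH (mp*x) (ep+1) mq eq' x 1 hpm hmq hxm (by omega), mul_zero, mul_zero,
        add_zero] at l2
      have h3 : asc x (mp * x) (mq * r) = 0 := by
        rw [sk3' h1 h2, M2 h1 h2,
          IH (mq*r) (eq'+dr) mp ep x 1 (hmq.mul hr) hmp hxm (by omega), mul_zero, neg_zero]
      rw [h3, zero_add] at l2
      rw [hp', hq', ← cyc h1 h2, l2]

theorem key {a b : A} :
    ∀ n p dp q dq r dr, IsMon a b p dp → IsMon a b q dq → IsMon a b r dr →
      dp + dq + dr ≤ n → asc p q r = 0 := by
  intro n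
  induction n using Nat.strong_induction_on with
  | _ n IHn =>
    intro p dp q dq r dr hp hq hr hsum
    rcases lt_or_eq_of_le hsum with hlt | heq
    · exact IHn (dp + dq + dr) hlt p dp q dq r dr hp hq hr le_rfl
    · have IH : ∀ p dp q dq r dr, IsMon a b p dp → IsMon a b q dq → IsMon a b r dr →
          dp + dq + dr < n → asc p q r = 0 := fun p' dp' q' dq' r' dr' hp' hq' hr' h =>
        IHn (dp' + dq' + dr') h p' dp' q' dq' r' dr' hp' hq' hr' le_rfl
      have hppos := hp.pos; have hqpos := hq.pos; have hrpos := hr.pos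
      obtain ⟨xp, hxp, hpx⟩ := peel h1 h2 IH hp (by omega)
      obtain ⟨xq, hxq, hqx⟩ := peel h1 h2 IH hq (by omega)
      obtain ⟨xr, hxr, hrx⟩ := peel h1 h2 IH hr (by omega)
      have casePQ : ∀ x : A, (x = a ∨ x = b) →
          (p = x ∨ ∃ m e, IsMon a b m e ∧ e + 1 ≤ dp ∧ p = m * x) →
          (q = x ∨ ∃ m e, IsMon a b m e ∧ e + 1 ≤ dq ∧ q = m * x) →
          asc p q r = 0 := fun x hx hpx hqx =>
        core h1 h2 IH hp hq hr hx hsum hpx hqx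
      have casePR : ∀ x : A, (x = a ∨ x = b) →
          (p = x ∨ ∃ m e, IsMon a b m e ∧ e + 1 ≤ dp ∧ p = m * x) →
          (r = x ∨ ∃ m e, IsMon a b m e ∧ e + 1 ≤ dr ∧ r = m * x) →
          asc p q r = 0 := by
        intro x hx hpx hrx
        rw [sk3' h1 h2, core h1 h2 IH hp hr hq hx (by omega) hpx hrx, neg_zero]
      have caseQR : ∀ x : A, (x = a ∨ x = b) →
          (q = x ∨ ∃ m e, IsMon a b m e ∧ e + 1 ≤ dq ∧ q = m * x) →
          (r = x ∨ ∃ m e, IsMon a b m e ∧ e + 1 ≤ dr ∧ r = m * x) →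
          asc p q r = 0 := by
        intro x hx hqx hrx
        rw [cyc h1 h2]
        exact core h1 h2 IH hq hr hp hx (by omega) hqx hrx
      rcases hxp with h1' | h1' <;> rcases hxq with h2' | h2' <;>
        rcases hxr with h3' | h3' <;>
        rw [h1'] at hpx <;> rw [h2'] at hqx <;> rw [h3'] at hrx
      · exact casePQ a (Or.inl rfl) hpx hqx
      · exact casePQ a (Or.inl rfl) hpx hqx
      · exact casePR a (Or.inl rfl) hpx hrx
      · exact caseQR b (Or.inr rfl) hqx hrx
      · exact caseQR a (Or.inl rfl) hqx hrx
      · exact casePR b (Or.inr rfl) hpx hrx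
      · exact casePQ b (Or.inr rfl) hpx hqx
      · exact casePQ b (Or.inr rfl) hpx hqx

omit h1 h2 in
theorem mem_span_mul {a b : A} {x y : A}
    (hx : x ∈ AddSubgroup.closure {p : A | ∃ d, IsMon a b p d})
    (hy : y ∈ AddSubgroup.closure {p : A | ∃ d, IsMon a b p d}) :
    x * y ∈ AddSubgroup.closure {p : A | ∃ d, IsMon a b p d} := by
  refine AddSubgroup.closure_induction (p := fun x _ =>
      x * y ∈ AddSubgroup.closure {p : A | ∃ d, IsMon a b p d}) ?_ ?_ ?_ ?_ hx
  · intro s hs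
    refine AddSubgroup.closure_induction (p := fun y _ =>
        s * y ∈ AddSubgroup.closure {p : A | ∃ d, IsMon a b p d}) ?_ ?_ ?_ ?_ hy
    · intro t ht
      obtain ⟨ds, hs⟩ := hs; obtain ⟨dt, ht⟩ := ht
      exact AddSubgroup.subset_closure ⟨ds + dt, hs.mul ht⟩
    · show s * 0 ∈ _
      rw [mul_zero]; exact zero_mem _
    · intro u v _ _ ihu ihv
      show s * (u + v) ∈ _
      rw [mul_add]
      exact add_mem ihu ihv
    · intro u _ ihu
      show s * (-u) ∈ _
      rw [mul_neg]
      exact neg_mem ihu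
  · show 0 * y ∈ _
    rw [zero_mul]; exact zero_mem _
  · intro u v _ _ ihu ihv
    show (u + v) * y ∈ _
    rw [add_mul]
    exact add_mem ihu ihv
  · intro u _ ihu
    show (-u) * y ∈ _
    rw [neg_mul]
    exact neg_mem ihu

theorem asc_span {a b : A} {x y z : A}
    (hx : x ∈ AddSubgroup.closure {p : A | ∃ d, IsMon a b p d})
    (hy : y ∈ AddSubgroup.closure {p : A | ∃ d, IsMon a b p d})
    (hz : z ∈ AddSubgroup.closure {p : A | ∃ d, IsMon a b p d}) :
    asc x y z = 0 := by
  refine AddSubgroup.closure_induction (p := fun x _ => asc x y z = 0) ?_ ?_ ?_ ?_ hx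
  · intro s hs
    refine AddSubgroup.closure_induction (p := fun y _ => asc s y z = 0) ?_ ?_ ?_ ?_ hy
    · intro t ht
      refine AddSubgroup.closure_induction (p := fun z _ => asc s t z = 0) ?_ ?_ ?_ ?_ hz
      · intro u hu
        obtain ⟨ds, hs⟩ := hs; obtain ⟨dt, ht⟩ := ht; obtain ⟨du, hu⟩ := hu
        exact key h1 h2 (ds + dt + du) s ds t dt u du hs ht hu le_rfl
      · exact asc_zero3 s t
      · intro u v _ _ ihu ihv
        have ihu' : asc s t u = 0 := ihu
        have ihv' : asc s t v = 0 := ihv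
        show asc s t (u + v) = 0
        rw [asc_add3, ihu', ihv', add_zero]
      · intro u _ ihu
        have ihu' : asc s t u = 0 := ihu
        show asc s t (-u) = 0
        rw [asc_neg3, ihu', neg_zero]
    · exact asc_zero2 s z
    · intro u v _ _ ihu ihv
      have ihu' : asc s u z = 0 := ihu
      have ihv' : asc s v z = 0 := ihv
      show asc s (u + v) z = 0
      rw [asc_add2, ihu', ihv', add_zero]
    · intro u _ ihu
      have ihu' : asc s u z = 0 := ihu
      show asc s (-u) z = 0
      rw [asc_neg2, ihu', neg_zero]
  · exact asc_zero1 y z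
  · intro u v _ _ ihu ihv
    have ihu' : asc u y z = 0 := ihu
    have ihv' : asc v y z = 0 := ihv
    show asc (u + v) y z = 0
    rw [asc_add1, ihu', ihv', add_zero]
  · intro u _ ihu
    have ihu' : asc u y z = 0 := ihu
    show asc (-u) y z = 0
    rw [asc_neg1, ihu', neg_zero]

omit h1 h2 in
theorem closure_sub {a b : A} {x : A}
    (hx : x ∈ NonUnitalSubring.closure ({a, b} : Set A)) :
    x ∈ AddSubgroup.closure {p : A | ∃ d, IsMon a b p d} := by
  refine NonUnitalSubring.closure_induction
    (p := fun x _ => x ∈ AddSubgroup.closure {p : A | ∃ d, IsMon a b p d}) ?_ ?_ ?_ ?_ ?_ hx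
  · intro t ht
    rcases ht with h | h
    · exact AddSubgroup.subset_closure ⟨1, IsMon.letter (Or.inl h)⟩
    · exact AddSubgroup.subset_closure ⟨1, IsMon.letter (Or.inr h)⟩
  · exact zero_mem _
  · intro u v _ _ hu hv; exact add_mem hu hv
  · intro u _ hu; exact neg_mem hu
  · intro u v _ _ hu hv; exact mem_span_mul hu hv

end Alt

end ArtinAux

/-- Artin's theorem: in an alternative (not necessarily associative) ring,
the (non-unital) subring generated by any two elements is associative. -/
theorem artin_subring_associative {A : Type*} [NonUnitalNonAssocRing A]
    (h1 : ∀ x y : A, (x * x) * y = x * (x * y))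
    (h2 : ∀ x y : A, (y * x) * x = y * (x * x))
    (a b : A) :
    ∀ x ∈ NonUnitalSubring.closure ({a, b} : Set A),
    ∀ y ∈ NonUnitalSubring.closure ({a, b} : Set A),
    ∀ z ∈ NonUnitalSubring.closure ({a, b} : Set A),
      (x * y) * z = x * (y * z) := by
  intro x hx y hy z hz
  have h := ArtinAux.asc_span h1 h2 (a := a) (b := b)
    (ArtinAux.closure_sub hx) (ArtinAux.closure_sub hy) (ArtinAux.closure_sub hz)
  rw [ArtinAux.asc] at h
  exact sub_eq_zero.mp h
end

section
/- Let A be a real alternative *-algebra and let Q_A be its quadratic cone. Every nonzero element x of Q_A is invertible, with inverse x⁻¹ = n(x)⁻¹ x^c, where n(x) = x x^c ∈ ℝ_{>0}. -/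
variable {A : Type*} [NonAssocRing A] [Module ℝ A] [StarRing A]

/-- The quadratic cone of a real alternative *-algebra. -/
def QCone (x : A) : Prop :=
  (∃ r : ℝ, x = r • (1 : A)) ∨
  (∃ t n : ℝ, x + star x = t • (1 : A) ∧ x * star x = n • (1 : A) ∧ t ^ 2 - 4 * n < 0)

/-- Every nonzero element `x` of the quadratic cone is invertible with inverse
`n(x)⁻¹ • x^c`, where `n(x) = x * x^c` is a positive real number. -/
theorem qcone_inverse [StarModule ℝ A] [IsScalarTower ℝ A A] [SMulCommClass ℝ A A]
    [FiniteDimensional ℝ A]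
    (h1 : ∀ x y : A, (x * x) * y = x * (x * y))
    (h2 : ∀ x y : A, (y * x) * x = y * (x * x))
    (hone : (1 : A) ≠ 0)
    (x : A) (hx : QCone x) (hx0 : x ≠ 0) :
    ∃ nr : ℝ, 0 < nr ∧ x * star x = nr • (1 : A) ∧
      x * (nr⁻¹ • star x) = 1 ∧ (nr⁻¹ • star x) * x = 1 := by
  rcases hx with ⟨r, hr⟩ | ⟨t, n, ht, hn, hlt⟩
  · have hr0 : r ≠ 0 := by
      rintro rfl; simp at hr; exact hx0 hr
    have hstar : star x = r • (1 : A) := by rw [hr, star_smul, star_one, star_trivial]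
    have hprod : x * star x = (r ^ 2) • (1 : A) := by
      rw [hstar, hr, smul_mul_assoc, one_mul, smul_smul, ← sq]
    have hpos : (0 : ℝ) < r ^ 2 := pow_two_pos_of_ne_zero hr0
    refine ⟨r ^ 2, hpos, hprod, ?_, ?_⟩
    · rw [mul_smul_comm, hprod, smul_smul, inv_mul_cancel₀ hpos.ne', one_smul]
    · have hcomm : star x * x = x * star x := by rw [hstar, hr]
      rw [smul_mul_assoc, hcomm, hprod, smul_smul, inv_mul_cancel₀ hpos.ne', one_smul]
  · have hnpos : (0 : ℝ) < n := by nlinarith [sq_nonneg t]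
    have hsx : star x = t • (1 : A) - x := by
      rw [← ht]; abel
    have hcomm : star x * x = x * star x := by
      rw [hsx, sub_mul, mul_sub, smul_mul_assoc, mul_smul_comm, one_mul, mul_one]
    refine ⟨n, hnpos, hn, ?_, ?_⟩
    · rw [mul_smul_comm, hn, smul_smul, inv_mul_cancel₀ hnpos.ne', one_smul]
    · rw [smul_mul_assoc, hcomm, hn, smul_smul, inv_mul_cancel₀ hnpos.ne', one_smul]
end

section
/- Let A be a real alternative *-algebra, D ⊆ ℂ open and invariant under conjugation, and Ω_D the associated circular domain. A slice function f : Ω_D → A induced by a stem function F = F₁ + F₂𝐢 satisfies the representation formula: for every x = r + sI ∈ Ω_D (with I ∈ S_A) and every J ∈ S_A with x_J := r + sJ ∈ Ω_D, one has f(x) = ½(f(x_J) + f(x_J^c)) − ½ I·(J·(f(x_J) − f(x_J^c))). In particular, a slice function is uniquely determined by its restriction to any plane ℂ_J. -/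
variable {A : Type*} [NonAssocRing A] [Module ℝ A] [StarRing A]

/-- Square roots of `-1` in the quadratic cone. -/
def SqrtNegOne (J : A) : Prop := QCone J ∧ J * J = -1

lemma slice_key [StarModule ℝ A] [IsScalarTower ℝ A A] [SMulCommClass ℝ A A]
    (h1 : ∀ x y : A, (x * x) * y = x * (x * y))
    (D : Set ℂ) (hD : ∀ z ∈ D, (starRingEnd ℂ) z ∈ D)
    (F₁ F₂ : ℂ → A)
    (hs1 : ∀ z ∈ D, F₁ ((starRingEnd ℂ) z) = F₁ z)
    (hs2 : ∀ z ∈ D, F₂ ((starRingEnd ℂ) z) = - F₂ z)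
    (f : A → A)
    (hf : ∀ (r s : ℝ) (J : A), SqrtNegOne J → (r : ℂ) + s * Complex.I ∈ D →
      f (r • (1 : A) + s • J)
        = F₁ ((r : ℂ) + s * Complex.I) + J * F₂ ((r : ℂ) + s * Complex.I)) :
    ∀ (r s : ℝ) (I J : A), SqrtNegOne I → SqrtNegOne J →
      (r : ℂ) + s * Complex.I ∈ D →
      f (r • (1 : A) + s • I)
        = (1 / 2 : ℝ) • (f (r • (1 : A) + s • J) + f (r • (1 : A) - s • J))
          - (1 / 2 : ℝ) •
              (I * (J * (f (r • (1 : A) + s • J) - f (r • (1 : A) - s • J)))) := by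
  intro r s I J hI hJ hz
  set z : ℂ := (r : ℂ) + s * Complex.I with hzdef
  have hconj : (starRingEnd ℂ) z = (r : ℂ) + (-s : ℝ) * Complex.I := by
    simp only [hzdef, map_add, map_mul, Complex.conj_ofReal, Complex.conj_I]
    push_cast; ring
  have hz' : (r : ℂ) + (-s : ℝ) * Complex.I ∈ D := hconj ▸ hD z hz
  have e1 := hf r s J hJ hz
  have e3 := hf r s I hI hz
  rw [← hzdef] at e1 e3
  have e2 : f (r • (1 : A) - s • J) = F₁ z - J * F₂ z := by
    have := hf r (-s) J hJ (by push_cast; push_cast at hz'; exact hz')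
    rw [show ((-s : ℝ) : ℂ) = -(s : ℂ) by push_cast; ring] at this
    rw [show (r : ℂ) + -(s:ℂ) * Complex.I = (starRingEnd ℂ) z by rw [hconj]; push_cast; ring,
      hs1 z hz, hs2 z hz] at this
    rw [show r • (1 : A) - s • J = r • (1 : A) + (-s) • J by rw [neg_smul, sub_eq_add_neg]]
    rw [this, mul_neg, sub_eq_add_neg]
  have hJJ : ∀ a : A, J * (J * a) = -a := by
    intro a; rw [← h1, hJ.2, neg_one_mul]
  rw [e1, e2, e3]
  have hsub : (F₁ z + J * F₂ z) - (F₁ z - J * F₂ z) = J * F₂ z + J * F₂ z := by abel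
  rw [hsub, mul_add, hJJ, mul_add, mul_neg]
  module

/-- Representation formula for slice functions: a slice function `f` induced by a stem
function `F = F₁ + F₂𝐢` satisfies, for `x = r + sI` and `x_J = r + sJ`,
`f(x) = ½(f(x_J) + f(x_J^c)) − ½ I (J (f(x_J) − f(x_J^c)))`; in particular a slice
function is uniquely determined by its values on a single plane `ℂ_J`. -/
theorem slice_representation_formula [StarModule ℝ A] [IsScalarTower ℝ A A]
    [SMulCommClass ℝ A A] [FiniteDimensional ℝ A]
    (h1 : ∀ x y : A, (x * x) * y = x * (x * y))
    (h2 : ∀ x y : A, (y * x) * x = y * (x * x))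
    (hone : (1 : A) ≠ 0)
    (D : Set ℂ) (hD : ∀ z ∈ D, (starRingEnd ℂ) z ∈ D)
    (F₁ F₂ : ℂ → A)
    (hs1 : ∀ z ∈ D, F₁ ((starRingEnd ℂ) z) = F₁ z)
    (hs2 : ∀ z ∈ D, F₂ ((starRingEnd ℂ) z) = - F₂ z)
    (f : A → A)
    (hf : ∀ (r s : ℝ) (J : A), SqrtNegOne J → (r : ℂ) + s * Complex.I ∈ D →
      f (r • (1 : A) + s • J)
        = F₁ ((r : ℂ) + s * Complex.I) + J * F₂ ((r : ℂ) + s * Complex.I)) :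
    (∀ (r s : ℝ) (I J : A), SqrtNegOne I → SqrtNegOne J →
      (r : ℂ) + s * Complex.I ∈ D →
      f (r • (1 : A) + s • I)
        = (1 / 2 : ℝ) • (f (r • (1 : A) + s • J) + f (r • (1 : A) - s • J))
          - (1 / 2 : ℝ) •
              (I * (J * (f (r • (1 : A) + s • J) - f (r • (1 : A) - s • J))))) ∧
    (∀ (g : A → A) (G₁ G₂ : ℂ → A),
      (∀ z ∈ D, G₁ ((starRingEnd ℂ) z) = G₁ z) →
      (∀ z ∈ D, G₂ ((starRingEnd ℂ) z) = - G₂ z) →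
      (∀ (r s : ℝ) (J : A), SqrtNegOne J → (r : ℂ) + s * Complex.I ∈ D →
        g (r • (1 : A) + s • J)
          = G₁ ((r : ℂ) + s * Complex.I) + J * G₂ ((r : ℂ) + s * Complex.I)) →
      ∀ J : A, SqrtNegOne J →
      (∀ r s : ℝ, (r : ℂ) + s * Complex.I ∈ D →
        g (r • (1 : A) + s • J) = f (r • (1 : A) + s • J)) →
      ∀ (r s : ℝ) (I : A), SqrtNegOne I → (r : ℂ) + s * Complex.I ∈ D →
        g (r • (1 : A) + s • I) = f (r • (1 : A) + s • I)) := by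
  constructor
  · exact slice_key h1 D hD F₁ F₂ hs1 hs2 f hf
  · intro g G₁ G₂ hg1 hg2 hg J hJ hagree r s I hI hz
    have hconj : (starRingEnd ℂ) ((r : ℂ) + s * Complex.I)
        = (r : ℂ) + (-s : ℝ) * Complex.I := by
      simp only [map_add, map_mul, Complex.conj_ofReal, Complex.conj_I]; push_cast; ring
    have hz' : (r : ℂ) + (-s : ℝ) * Complex.I ∈ D := hconj ▸ hD _ hz
    have hag1 := hagree r s hz
    have hag2 : g (r • (1 : A) - s • J) = f (r • (1 : A) - s • J) := by
      have := hagree r (-s) (by push_cast; push_cast at hz'; exact hz')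
      rwa [show r • (1 : A) + (-s) • J = r • (1 : A) - s • J by
        rw [neg_smul, sub_eq_add_neg]] at this
    rw [slice_key h1 D hD G₁ G₂ hg1 hg2 g hg r s I J hI hJ hz,
      slice_key h1 D hD F₁ F₂ hs1 hs2 f hf r s I J hI hJ hz, hag1, hag2]
end

section
/- Assume Q_A ≠ ℂ_J for a single J (i.e. the quadratic cone is not a single complex plane). A slice function f on Ω_D is slice preserving (i.e. its stem function components F₁, F₂ are real-valued) if and only if f(Ω_D ∩ ℂ_J) ⊆ ℂ_J for every J ∈ S_A. -/
variable {A : Type*} [NonAssocRing A] [Module ℝ A] [StarRing A]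

/-!
If both stem components are real, `f(r + sJ) = F₁ + J F₂` lies in `ℂ_J`. Conversely, evaluating
`f` at `z` and at `z̄` gives `F₁(z) ± J F₂(z) ∈ ℂ_J`, hence `F₁(z), F₂(z) ∈ ℂ_J` for every
`J ∈ S_A` (left alternativity gives `F₂ = -J (J F₂)`). A cone element outside `ℂ_J` lies in some
`ℂ_{J'}` with `J' ∈ S_A`, so `J' ∉ ℂ_J`, and then `ℂ_J ∩ ℂ_{J'} = ℝ`.
-/
open Submodule

section LinearAlgebra

variable {K V : Type*} [Field K] [AddCommGroup V] [Module K V]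

theorem span_pair_inf_span_pair_le_span_singleton {e J J' : V} (hJ' : J' ∉ span K {e, J}) :
    span K {e, J} ⊓ span K {e, J'} ≤ K ∙ e := by
  rintro v ⟨hvJ, hvJ'⟩
  obtain ⟨a, b, rfl⟩ := mem_span_pair.mp hvJ'
  obtain rfl | hb := eq_or_ne b 0
  · simpa using smul_mem _ a (mem_span_singleton_self e)
  · refine absurd ?_ hJ'
    have he : e ∈ span K {e, J} := subset_span (by simp)
    have hJ'_eq : J' = b⁻¹ • ((a • e + b • J') - a • e) := by
      rw [add_sub_cancel_left, smul_smul, inv_mul_cancel₀ hb, one_smul]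
    rw [hJ'_eq]
    exact smul_mem _ _ (sub_mem hvJ (smul_mem _ _ he))

theorem Submodule.mem_of_add_mem_of_sub_mem [CharZero K] (S : Submodule K V) {a b : V}
    (hadd : a + b ∈ S) (hsub : a - b ∈ S) : a ∈ S ∧ b ∈ S := by
  have ha : a = (2⁻¹ : K) • ((a + b) + (a - b)) := by
    rw [add_add_sub_cancel, ← two_smul K, smul_smul, inv_mul_cancel₀ two_ne_zero, one_smul]
  have hb : b = (2⁻¹ : K) • ((a + b) - (a - b)) := by
    rw [add_sub_sub_cancel, ← two_smul K, smul_smul, inv_mul_cancel₀ two_ne_zero, one_smul]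
  exact ⟨ha ▸ smul_mem _ _ (add_mem hadd hsub), hb ▸ smul_mem _ _ (sub_mem hadd hsub)⟩

end LinearAlgebra

section ComplexPlane

variable {R B : Type*} [CommRing R] [NonAssocRing B] [Module R B] [SMulCommClass R B B]

theorem mul_mem_span_one_self {J p : B} (hJ : J * J = -1) (hp : p ∈ span R {1, J}) :
    J * p ∈ span R {1, J} := by
  obtain ⟨a, b, rfl⟩ := mem_span_pair.mp hp
  rw [mul_add, mul_smul_comm, mul_smul_comm, mul_one, hJ, smul_neg]
  exact add_mem (smul_mem _ _ (subset_span (by simp)))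
    (neg_mem (smul_mem _ _ (subset_span (by simp))))

theorem mul_mem_span_one_self_iff {J p : B} (hJ : J * J = -1)
    (halt : (J * J) * p = J * (J * p)) : J * p ∈ span R {1, J} ↔ p ∈ span R {1, J} := by
  refine ⟨fun h ↦ ?_, mul_mem_span_one_self hJ⟩
  have hp : p = -(J * (J * p)) := by rw [← halt, hJ, neg_mul, one_mul, neg_neg]
  exact hp ▸ neg_mem (mul_mem_span_one_self hJ h)

end ComplexPlane

theorem sqrtNegOne_of_star_eq_neg {J : A} (hstar : star J = -J) (hJ : J * J = -1) :
    SqrtNegOne J :=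
  ⟨Or.inr ⟨0, 1, by simp [hstar], by simp [hstar, hJ], by norm_num⟩, hJ⟩

section Cone

variable [StarModule ℝ A] [IsScalarTower ℝ A A] [SMulCommClass ℝ A A]

theorem sqrtNegOne_inv_sqrt_smul {y : A} {m : ℝ} (hm : 0 < m) (hstar : star y = -y)
    (hy : y * y = (-m) • (1 : A)) : SqrtNegOne ((√m)⁻¹ • y) := by
  refine sqrtNegOne_of_star_eq_neg (by rw [star_smul, star_trivial, hstar, smul_neg]) ?_
  rw [smul_mul_smul_comm, hy, smul_smul, ← mul_inv, Real.mul_self_sqrt hm.le,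
    inv_mul_eq_div, neg_div, div_self hm.ne', neg_one_smul]

/-- A non-real element `x` of the cone, with trace `t` and norm `n`, is `t/2 + √(n - t²/4) J'`. -/
theorem exists_sqrtNegOne_mem_span_of_trace_norm {x : A} {t n : ℝ}
    (ht : x + star x = t • (1 : A)) (hn : x * star x = n • (1 : A)) (hdisc : t ^ 2 - 4 * n < 0) :
    ∃ J' : A, SqrtNegOne J' ∧ x ∈ span ℝ {1, J'} := by
  set m : ℝ := n - t ^ 2 / 4
  have hm : 0 < m := by simp only [m]; linarith
  have hstarx : star x = t • (1 : A) - x := by rw [← ht, add_sub_cancel_left]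
  have hxx : x * x = t • x - n • (1 : A) := by
    rw [hstarx, mul_sub, mul_smul_comm, mul_one] at hn
    linear_combination (norm := module) -hn
  set y : A := x - (t / 2) • 1
  have hstary : star y = -y := by
    simp only [y, star_sub, hstarx, star_smul, star_one, star_trivial]
    match_scalars <;> ring
  have hyy : y * y = (-m) • (1 : A) := by
    simp only [y, m, sub_mul, mul_sub, smul_mul_assoc, mul_smul_comm, one_mul, mul_one,
      hxx]
    match_scalars <;> ring
  refine ⟨(√m)⁻¹ • y, sqrtNegOne_inv_sqrt_smul hm hstary hyy, mem_span_pair.mpr ⟨t / 2, √m, ?_⟩⟩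
  rw [smul_smul, mul_inv_cancel₀ (Real.sqrt_pos.mpr hm).ne', one_smul, add_sub_cancel]

theorem exists_sqrtNegOne_not_mem_span {J : A}
    (hQ : ∃ x : A, QCone x ∧ x ∉ (span ℝ ({1, J} : Set A) : Set A)) :
    ∃ J' : A, SqrtNegOne J' ∧ J' ∉ span ℝ {1, J} := by
  obtain ⟨x, ⟨r, rfl⟩ | ⟨t, n, ht, hn, hdisc⟩, hx⟩ := hQ
  · exact absurd (smul_mem _ r (subset_span (by simp))) hx
  obtain ⟨J', hJ', hxJ'⟩ := exists_sqrtNegOne_mem_span_of_trace_norm ht hn hdisc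
  refine ⟨J', hJ', fun hJ'J ↦ hx ?_⟩
  have hle : span ℝ {1, J'} ≤ span ℝ {(1 : A), J} :=
    span_le.mpr (Set.insert_subset (subset_span (by simp)) (Set.singleton_subset_iff.mpr hJ'J))
  exact hle hxJ'

end Cone

theorem slice_preserving_iff_general [StarModule ℝ A] [IsScalarTower ℝ A A]
    [SMulCommClass ℝ A A]
    (h1 : ∀ x y : A, (x * x) * y = x * (x * y))
    (hSA : ∃ J : A, SqrtNegOne J)
    (hQ : ∀ J : A, SqrtNegOne J →
      ∃ x : A, QCone x ∧ x ∉ (Submodule.span ℝ ({1, J} : Set A) : Set A))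
    (D : Set ℂ) (hD : ∀ z ∈ D, (starRingEnd ℂ) z ∈ D)
    (F₁ F₂ : ℂ → A)
    (hs1 : ∀ z ∈ D, F₁ ((starRingEnd ℂ) z) = F₁ z)
    (hs2 : ∀ z ∈ D, F₂ ((starRingEnd ℂ) z) = - F₂ z)
    (f : A → A)
    (hf : ∀ (r s : ℝ) (J : A), SqrtNegOne J → (r : ℂ) + s * Complex.I ∈ D →
      f (r • (1 : A) + s • J)
        = F₁ ((r : ℂ) + s * Complex.I) + J * F₂ ((r : ℂ) + s * Complex.I)) :
    (∀ z ∈ D, (∃ r : ℝ, F₁ z = r • (1 : A)) ∧ (∃ r : ℝ, F₂ z = r • (1 : A))) ↔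
    (∀ J : A, SqrtNegOne J → ∀ r s : ℝ, (r : ℂ) + s * Complex.I ∈ D →
      f (r • (1 : A) + s • J) ∈ Submodule.span ℝ ({1, J} : Set A)) := by
  constructor
  · rintro h J hJ r s hz
    obtain ⟨⟨a, ha⟩, ⟨b, hb⟩⟩ := h _ hz
    rw [hf r s J hJ hz, ha, hb, mul_smul_comm, mul_one]
    exact mem_span_pair.mpr ⟨a, b, rfl⟩
  intro h z hz
  have hzD : (z.re : ℂ) + z.im * Complex.I ∈ D := by rwa [Complex.re_add_im]
  have hconj : (z.re : ℂ) + ((-z.im : ℝ) : ℂ) * Complex.I = starRingEnd ℂ z := by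
    apply Complex.ext <;> simp
  have hconjD := hconj ▸ hD z hz
  have stem_mem : ∀ J : A, SqrtNegOne J → F₁ z ∈ span ℝ {1, J} ∧ F₂ z ∈ span ℝ {1, J} := by
    intro J hJ
    have hadd := h J hJ z.re z.im hzD
    have hsub := h J hJ z.re (-z.im) hconjD
    rw [hf _ _ _ hJ hzD, Complex.re_add_im] at hadd
    rw [hf _ _ _ hJ hconjD, hconj, hs1 z hz, hs2 z hz, mul_neg, ← sub_eq_add_neg] at hsub
    obtain ⟨hF₁, hJF₂⟩ := (span ℝ {1, J}).mem_of_add_mem_of_sub_mem hadd hsub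
    exact ⟨hF₁, (mul_mem_span_one_self_iff hJ.2 (h1 J _)).mp hJF₂⟩
  obtain ⟨J, hJ⟩ := hSA
  obtain ⟨J', hJ', hJ'J⟩ := exists_sqrtNegOne_not_mem_span (hQ J hJ)
  have real_of_mem_both : ∀ v : A, v ∈ span ℝ {1, J} → v ∈ span ℝ {1, J'} →
      ∃ r : ℝ, v = r • (1 : A) := fun v hvJ hvJ' ↦
    (mem_span_singleton.mp (span_pair_inf_span_pair_le_span_singleton hJ'J ⟨hvJ, hvJ'⟩)).imp
      fun _ h ↦ h.symm
  exact ⟨real_of_mem_both _ (stem_mem J hJ).1 (stem_mem J' hJ').1,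
    real_of_mem_both _ (stem_mem J hJ).2 (stem_mem J' hJ').2⟩

/-- Assuming the quadratic cone is not a single complex plane, a slice function is slice
preserving (its stem components are real-valued) if and only if it maps every plane
`ℂ_J` into itself. -/
theorem slice_preserving_iff [StarModule ℝ A] [IsScalarTower ℝ A A]
    [SMulCommClass ℝ A A] [FiniteDimensional ℝ A]
    (h1 : ∀ x y : A, (x * x) * y = x * (x * y))
    (h2 : ∀ x y : A, (y * x) * x = y * (x * x))
    (hone : (1 : A) ≠ 0)
    (hSA : ∃ J : A, SqrtNegOne J)
    (hQ : ∀ J : A, SqrtNegOne J →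
      ∃ x : A, QCone x ∧ x ∉ (Submodule.span ℝ ({1, J} : Set A) : Set A))
    (D : Set ℂ) (hD : ∀ z ∈ D, (starRingEnd ℂ) z ∈ D)
    (hDslice : ∀ z ∈ D, ∃ r s : ℝ, z = (r : ℂ) + s * Complex.I)
    (F₁ F₂ : ℂ → A)
    (hs1 : ∀ z ∈ D, F₁ ((starRingEnd ℂ) z) = F₁ z)
    (hs2 : ∀ z ∈ D, F₂ ((starRingEnd ℂ) z) = - F₂ z)
    (f : A → A)
    (hf : ∀ (r s : ℝ) (J : A), SqrtNegOne J → (r : ℂ) + s * Complex.I ∈ D →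
      f (r • (1 : A) + s • J)
        = F₁ ((r : ℂ) + s * Complex.I) + J * F₂ ((r : ℂ) + s * Complex.I)) :
    (∀ z ∈ D, (∃ r : ℝ, F₁ z = r • (1 : A)) ∧ (∃ r : ℝ, F₂ z = r • (1 : A))) ↔
    (∀ J : A, SqrtNegOne J → ∀ r s : ℝ, (r : ℂ) + s * Complex.I ∈ D →
      f (r • (1 : A) + s • J) ∈ Submodule.span ℝ ({1, J} : Set A)) :=
  slice_preserving_iff_general h1 hSA hQ D hD F₁ F₂ hs1 hs2 f hf
end

section
/- For polynomials with right coefficients in a real alternative *-algebra A, the star product coincides with the slice product: if p(x) = Σ_{k} x^k c_k and q(x) = Σ_h x^h d_h, then the slice function p · q (induced by the pointwise product of the stem functions P(z) = Σ z^k c_k and Q(z) = Σ z^h d_h) equals the star product (p * q)(x) = Σ_j x^j (Σ_{k+h=j} c_k d_h) on the quadratic cone Q_A. -/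
/-!
Write `z = r + s i` and `x = r + s J`. Since `J² = -1`, the powers of `x` are
`x^j = Re(z^j) + Im(z^j) J`, so `x ↦ Σ x^j e_j` is the slice function induced by the stem function
`z ↦ Σ z^j e_j`. On the other hand, multiplying the stem functions of `p` and `q` in `A ⊗ ℂ`
termwise gives `Σ_{k,h} z^{k+h} c_k d_h`, whose coefficient of `z^j` is the Cauchy coefficient
`Σ_{k+h=j} c_k d_h` of the star product.
-/

variable {A : Type*} [NonAssocRing A] [Module ℝ A] [StarRing A]

/-- Powers in a not necessarily associative algebra. -/
def npow (x : A) : ℕ → A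
  | 0 => 1
  | n + 1 => npow x n * x

open Finset

lemma sum_range_sum_range_eq_sum_antidiagonal {M : Type*} [AddCommMonoid M] (G : ℕ → ℕ → M)
    (n m : ℕ) (hG₁ : ∀ k h, n < k → G k h = 0) (hG₂ : ∀ k h, m < h → G k h = 0) :
    ∑ k ∈ range (n + 1), ∑ h ∈ range (m + 1), G k h
      = ∑ j ∈ range (n + m + 1), ∑ p ∈ antidiagonal j, G p.1 p.2 := by
  simp_rw [Nat.sum_antidiagonal_eq_sum_range_succ_mk, sum_range_diag_flip]
  rw [← sum_subset (range_subset_range.2 (by omega) : range (n + 1) ⊆ range (n + m + 1))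
    fun k _ hk => sum_eq_zero fun h _ => hG₁ k h (by simpa using hk)]
  refine sum_congr rfl fun k hk => ?_
  have hkn : k ≤ n := Nat.lt_succ_iff.1 (mem_range.1 hk)
  exact sum_subset (range_subset_range.2 (by omega))
    fun h _ hh => hG₂ k h (by simpa using hh)

section StemProduct

variable {R : Type*} [NonUnitalNonAssocRing R] [Module ℝ R]

lemma sum_range_sum_range_smul_mul_eq_sum_smul_antidiagonal (f : ℕ → ℝ) (c d : ℕ → R)
    (n m : ℕ) (hc : ∀ k, n < k → c k = 0) (hd : ∀ k, m < k → d k = 0) :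
    ∑ k ∈ range (n + 1), ∑ h ∈ range (m + 1), f (k + h) • (c k * d h)
      = ∑ j ∈ range (n + m + 1), f j • ∑ p ∈ antidiagonal j, c p.1 * d p.2 := by
  rw [sum_range_sum_range_eq_sum_antidiagonal (fun k h => f (k + h) • (c k * d h)) n m
    (fun k h hk => by simp [hc k hk]) (fun k h hh => by simp [hd h hh])]
  refine sum_congr rfl fun j _ => ?_
  rw [smul_sum]
  exact sum_congr rfl fun p hp => by rw [mem_antidiagonal.1 hp]

variable [IsScalarTower ℝ R R] [SMulCommClass ℝ R R]

lemma sum_range_smul_mul_sum_range_smul (u v : ℕ → ℝ) (c d : ℕ → R) (n m : ℕ) :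
    (∑ k ∈ range (n + 1), u k • c k) * (∑ h ∈ range (m + 1), v h • d h)
      = ∑ k ∈ range (n + 1), ∑ h ∈ range (m + 1), (u k * v h) • (c k * d h) := by
  simp_rw [sum_mul_sum, smul_mul_smul_comm]

variable (z : ℂ) (c d : ℕ → R) (n m : ℕ) (hc : ∀ k, n < k → c k = 0) (hd : ∀ k, m < k → d k = 0)
include hc hd

lemma stem_mul_re :
    (∑ k ∈ range (n + 1), (z ^ k).re • c k) * (∑ h ∈ range (m + 1), (z ^ h).re • d h)
      - (∑ k ∈ range (n + 1), (z ^ k).im • c k) * (∑ h ∈ range (m + 1), (z ^ h).im • d h)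
      = ∑ j ∈ range (n + m + 1), (z ^ j).re • ∑ p ∈ antidiagonal j, c p.1 * d p.2 := by
  rw [sum_range_smul_mul_sum_range_smul, sum_range_smul_mul_sum_range_smul,
    ← sum_range_sum_range_smul_mul_eq_sum_smul_antidiagonal _ c d n m hc hd]
  simp_rw [← sum_sub_distrib, ← sub_smul, pow_add, Complex.mul_re]

lemma stem_mul_im :
    (∑ k ∈ range (n + 1), (z ^ k).re • c k) * (∑ h ∈ range (m + 1), (z ^ h).im • d h)
      + (∑ k ∈ range (n + 1), (z ^ k).im • c k) * (∑ h ∈ range (m + 1), (z ^ h).re • d h)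
      = ∑ j ∈ range (n + m + 1), (z ^ j).im • ∑ p ∈ antidiagonal j, c p.1 * d p.2 := by
  rw [sum_range_smul_mul_sum_range_smul, sum_range_smul_mul_sum_range_smul,
    ← sum_range_sum_range_smul_mul_eq_sum_smul_antidiagonal _ c d n m hc hd]
  simp_rw [← sum_add_distrib, ← add_smul, pow_add, Complex.mul_im]

end StemProduct

section SliceEvaluation

variable {R : Type*} [NonAssocRing R] [Module ℝ R] [IsScalarTower ℝ R R] [SMulCommClass ℝ R R]
  {J : R} (hJ : J * J = -1) (z : ℂ)
include hJ

lemma npow_re_smul_one_add_im_smul (j : ℕ) :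
    npow (z.re • (1 : R) + z.im • J) j = (z ^ j).re • (1 : R) + (z ^ j).im • J := by
  induction j with
  | zero => simp [npow]
  | succ j ih =>
    rw [npow, ih, pow_succ, Complex.mul_re, Complex.mul_im]
    simp only [mul_add, add_mul, smul_mul_smul_comm, one_mul, mul_one, hJ, smul_neg,
      sub_smul, add_smul]
    module

lemma sum_npow_mul_eq (s : Finset ℕ) (e : ℕ → R) :
    ∑ j ∈ s, npow (z.re • (1 : R) + z.im • J) j * e j
      = ∑ j ∈ s, (z ^ j).re • e j + J * ∑ j ∈ s, (z ^ j).im • e j := by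
  simp_rw [npow_re_smul_one_add_im_smul hJ, mul_sum, ← sum_add_distrib, add_mul,
    smul_mul_assoc, one_mul, mul_smul_comm]

end SliceEvaluation

theorem star_product_eq_slice_product_general [IsScalarTower ℝ A A]
    [SMulCommClass ℝ A A]
    (c d : ℕ → A) (n m : ℕ)
    (hc : ∀ k : ℕ, n < k → c k = 0) (hd : ∀ k : ℕ, m < k → d k = 0)
    (J : A) (hJ : SqrtNegOne J) (r s : ℝ) :
    ∀ (z : ℂ) (x : A), z = (r : ℂ) + s * Complex.I → x = r • (1 : A) + s • J →
      ((∑ k ∈ Finset.range (n + 1), (z ^ k).re • c k) *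
          (∑ k ∈ Finset.range (m + 1), (z ^ k).re • d k)
        - (∑ k ∈ Finset.range (n + 1), (z ^ k).im • c k) *
            (∑ k ∈ Finset.range (m + 1), (z ^ k).im • d k))
      + J * ((∑ k ∈ Finset.range (n + 1), (z ^ k).re • c k) *
              (∑ k ∈ Finset.range (m + 1), (z ^ k).im • d k)
            + (∑ k ∈ Finset.range (n + 1), (z ^ k).im • c k) *
                (∑ k ∈ Finset.range (m + 1), (z ^ k).re • d k))
      = ∑ j ∈ Finset.range (n + m + 1),
          npow x j * (∑ p ∈ Finset.HasAntidiagonal.antidiagonal j, c p.1 * d p.2) := by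
  intro z x hz hx
  have hx' : x = z.re • (1 : A) + z.im • J := by simp [hz, hx]
  rw [hx', sum_npow_mul_eq hJ.2, stem_mul_re z c d n m hc hd, stem_mul_im z c d n m hc hd]

/-- For polynomials with right coefficients, the slice product (induced by the
pointwise product of stem functions) equals the star product. -/
theorem star_product_eq_slice_product [StarModule ℝ A] [IsScalarTower ℝ A A]
    [SMulCommClass ℝ A A] [FiniteDimensional ℝ A]
    (h1 : ∀ x y : A, (x * x) * y = x * (x * y))
    (h2 : ∀ x y : A, (y * x) * x = y * (x * x))
    (hone : (1 : A) ≠ 0)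
    (c d : ℕ → A) (n m : ℕ)
    (hc : ∀ k : ℕ, n < k → c k = 0) (hd : ∀ k : ℕ, m < k → d k = 0)
    (J : A) (hJ : SqrtNegOne J) (r s : ℝ) :
    ∀ (z : ℂ) (x : A), z = (r : ℂ) + s * Complex.I → x = r • (1 : A) + s • J →
      ((∑ k ∈ Finset.range (n + 1), (z ^ k).re • c k) *
          (∑ k ∈ Finset.range (m + 1), (z ^ k).re • d k)
        - (∑ k ∈ Finset.range (n + 1), (z ^ k).im • c k) *
            (∑ k ∈ Finset.range (m + 1), (z ^ k).im • d k))
      + J * ((∑ k ∈ Finset.range (n + 1), (z ^ k).re • c k) *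
              (∑ k ∈ Finset.range (m + 1), (z ^ k).im • d k)
            + (∑ k ∈ Finset.range (n + 1), (z ^ k).im • c k) *
                (∑ k ∈ Finset.range (m + 1), (z ^ k).re • d k))
      = ∑ j ∈ Finset.range (n + m + 1),
          npow x j * (∑ p ∈ Finset.HasAntidiagonal.antidiagonal j, c p.1 * d p.2) :=
  star_product_eq_slice_product_general c d n m hc hd J hJ r s
end

section
/- Let A be a real alternative *-algebra and y ∈ Q_A. The characteristic polynomial Δ_y(x) = x² − x t(y) + n(y) is a slice preserving slice regular function on Q_A whose zero set is exactly the sphere S_y = {ξ + ηK : K ∈ S_A}, where y = ξ + ηJ with ξ, η ∈ ℝ, η ≥ 0, J ∈ S_A. -/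
variable {A : Type*} [NonAssocRing A] [Module ℝ A] [StarRing A]

set_option linter.unusedSectionVars false

section Aux
variable [IsScalarTower ℝ A A] [SMulCommClass ℝ A A]

lemma smul_one_inj (hone : (1 : A) ≠ 0) {a b : ℝ} (h : a • (1 : A) = b • (1 : A)) : a = b := by
  by_contra hab
  have h2 : (a - b) • (1 : A) = 0 := by rw [sub_smul, h, sub_self]
  have h3 := congrArg (fun z => (a - b)⁻¹ • z) h2
  simp only [smul_smul, inv_mul_cancel₀ (sub_ne_zero.mpr hab), one_smul, smul_zero] at h3
  exact hone h3

lemma smul_one_mul_smul_one (a b : ℝ) : (a • (1 : A)) * (b • (1 : A)) = (a * b) • (1 : A) := by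
  rw [smul_mul_assoc, mul_smul_comm, one_mul, smul_smul]

lemma indep (hone : (1 : A) ≠ 0) {K : A} (hK : K * K = -1) {a b : ℝ}
    (h : a • (1 : A) + b • K = 0) : a = 0 ∧ b = 0 := by
  by_cases hb : b = 0
  · subst hb
    simp only [zero_smul, add_zero] at h
    refine ⟨?_, rfl⟩
    have := smul_one_inj hone (a := a) (b := 0) (by simpa using h)
    exact this
  · exfalso
    have hK1 : K = (b⁻¹ * (-a)) • (1 : A) := by
      have hbK : b • K = (-a) • (1 : A) := by
        rw [neg_smul]; linear_combination (norm := module) h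
      calc K = b⁻¹ • (b • K) := by rw [smul_smul, inv_mul_cancel₀ hb, one_smul]
        _ = (b⁻¹ * (-a)) • (1 : A) := by rw [hbK, smul_smul]
    have : ((b⁻¹ * (-a)) * (b⁻¹ * (-a))) • (1 : A) = (-1 : ℝ) • (1 : A) := by
      rw [← smul_one_mul_smul_one, ← hK1, hK]; simp
    have := smul_one_inj hone this
    nlinarith [this]

lemma star_sqrtNegOne (hone : (1 : A) ≠ 0) {J : A} (hJ : SqrtNegOne J) : star J = -J := by
  obtain ⟨hq, hJ2⟩ := hJ
  rcases hq with ⟨r, hr⟩ | ⟨t, n, ht, hn, hd⟩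
  · exfalso
    have : (r * r) • (1 : A) = (-1 : ℝ) • (1 : A) := by
      rw [← smul_one_mul_smul_one, ← hr, hJ2]; simp
    have := smul_one_inj hone this
    nlinarith [this]
  · have hsJ : star J = t • (1 : A) - J := by linear_combination (norm := module) ht
    have hJJ : J * star J = t • J + 1 := by
      rw [hsJ, mul_sub, mul_smul_comm, mul_one, hJ2, sub_neg_eq_add]
    have htJ : t • J = (n - 1) • (1 : A) := by
      have : t • J + 1 = n • (1 : A) := by rw [← hJJ, hn]
      have h1 : (1 : A) = (1 : ℝ) • (1 : A) := by simp
      rw [sub_smul]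
      linear_combination (norm := module) this
    by_cases htz : t = 0
    · subst htz
      have : (0 : ℝ) = n - 1 := smul_one_inj hone (by simpa using htJ)
      rw [hsJ]; simp
    · exfalso
      have hJ1 : J = (t⁻¹ * (n - 1)) • (1 : A) := by
        calc J = t⁻¹ • (t • J) := by rw [smul_smul, inv_mul_cancel₀ htz, one_smul]
          _ = (t⁻¹ * (n - 1)) • (1 : A) := by rw [htJ, smul_smul]
      have : ((t⁻¹ * (n - 1)) * (t⁻¹ * (n - 1))) • (1 : A) = (-1 : ℝ) • (1 : A) := by
        rw [← smul_one_mul_smul_one, ← hJ1, hJ2]; simp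
      have := smul_one_inj hone this
      nlinarith [this]

end Aux

section Aux2
variable [IsScalarTower ℝ A A] [SMulCommClass ℝ A A]

lemma mul_expand {K : A} (hK : K * K = -1) (r s r' s' : ℝ) :
    (r • (1 : A) + s • K) * (r' • (1 : A) + s' • K)
      = (r * r' - s * s') • (1 : A) + (r * s' + s * r') • K := by
  simp only [add_mul, mul_add, smul_mul_assoc, mul_smul_comm, one_mul, mul_one, hK,
    smul_smul, smul_neg]
  rw [sub_smul, add_smul]
  module

lemma delta_val {K : A} (hK : K * K = -1) (ty ny : ℝ) (Δ : A → A)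
    (hΔ : ∀ x : A, Δ x = npow x 2 - ty • x + ny • (1 : A)) (r s : ℝ) :
    Δ (r • (1 : A) + s • K)
      = (r * r - s * s - ty * r + ny) • (1 : A) + (2 * r * s - ty * s) • K := by
  have hnp : npow (r • (1 : A) + s • K) 2
      = (r • (1 : A) + s • K) * (r • (1 : A) + s • K) := by
    show (npow _ 1 * _) = _
    show ((npow _ 0 * _) * _) = _
    show ((1 * _) * _) = _
    rw [one_mul]
  rw [hΔ, hnp, mul_expand hK, smul_add, smul_smul, smul_smul]
  rw [show (r*r - s*s - ty*r + ny : ℝ) = (r*r - s*s) - ty*r + ny by ring,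
      show (2*r*s - ty*s : ℝ) = (r*s + s*r) - ty*s by ring]
  rw [sub_smul, add_smul, sub_smul]
  module

/-- decomposition of quadratic cone elements -/
lemma qcone_decomp [StarModule ℝ A] (hone : (1 : A) ≠ 0) {x : A} (hx : QCone x)
    {J : A} (hJ : SqrtNegOne J) :
    ∃ r s : ℝ, ∃ K : A, 0 ≤ s ∧ SqrtNegOne K ∧ x = r • (1 : A) + s • K := by
  rcases hx with ⟨r, hr⟩ | ⟨t, n, ht, hn, hd⟩
  · exact ⟨r, 0, J, le_refl 0, hJ, by simp [hr]⟩
  · have hpos : 0 < n - t ^ 2 / 4 := by nlinarith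
    set s : ℝ := Real.sqrt (n - t ^ 2 / 4) with hs
    have hspos : 0 < s := Real.sqrt_pos.mpr hpos
    have hs2 : s * s = n - t ^ 2 / 4 := Real.mul_self_sqrt hpos.le
    set x' : A := x - (t / 2) • (1 : A) with hx'
    have hsx : star x = t • (1 : A) - x := by linear_combination (norm := module) ht
    have hxx : x * x = t • x - n • (1 : A) := by
      have h1 : x * star x = t • x - x * x := by
        rw [hsx, mul_sub, mul_smul_comm, mul_one]
      rw [h1] at hn
      linear_combination (norm := module) -hn
    have hc : (-(s * s) : ℝ) = t ^ 2 / 4 - n := by rw [hs2]; ring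
    have hx'2 : x' * x' = (-(s * s)) • (1 : A) := by
      rw [hx']
      simp only [sub_mul, mul_sub, smul_mul_assoc, mul_smul_comm, one_mul, mul_one, smul_smul]
      rw [hxx, hc]
      match_scalars <;> ring
    have hsx' : star x' = -x' := by
      rw [hx', star_sub, star_smul, star_one, star_trivial (t / 2 : ℝ), hsx]
      module
    have hcc : s⁻¹ * s⁻¹ * -(s * s) = -1 := by field_simp
    have hKK : (s⁻¹ • x') * (s⁻¹ • x') = -1 := by
      rw [smul_mul_assoc, mul_smul_comm, hx'2, smul_smul, smul_smul, hcc]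
      simp
    refine ⟨t / 2, s, s⁻¹ • x', hspos.le, ⟨?_, hKK⟩, ?_⟩
    · right
      refine ⟨0, 1, ?_, ?_, by norm_num⟩
      · rw [star_smul, star_trivial, hsx', smul_neg, add_neg_cancel, zero_smul]
      · rw [star_smul, star_trivial, hsx', smul_neg, mul_neg, hKK]
        simp
    · rw [smul_smul, mul_inv_cancel₀ hspos.ne', one_smul, hx']
      module

end Aux2

/-- The characteristic polynomial `Δ_y(x) = x² − x t(y) + n(y)` of `y ∈ Q_A` is a slice
preserving slice regular function (it maps each plane `ℂ_K` to itself and is induced by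
the holomorphic stem `z ↦ z² − t(y) z + n(y)`) whose zero set is exactly the sphere
`S_y = {ξ + ηK : K ∈ S_A}` where `y = ξ + ηJ`, `η ≥ 0`. -/
theorem characteristic_polynomial_props [StarModule ℝ A] [IsScalarTower ℝ A A]
    [SMulCommClass ℝ A A] [FiniteDimensional ℝ A]
    (h1 : ∀ x y : A, (x * x) * y = x * (x * y))
    (h2 : ∀ x y : A, (y * x) * x = y * (x * x))
    (hone : (1 : A) ≠ 0)
    (y : A) (hy : QCone y) (ty ny ξ η : ℝ) (J : A) (hJ : SqrtNegOne J)
    (hty : y + star y = ty • (1 : A)) (hny : y * star y = ny • (1 : A))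
    (hyform : y = ξ • (1 : A) + η • J) (hη : 0 ≤ η)
    (Δ : A → A)
    (hΔ : ∀ x : A, Δ x = npow x 2 - ty • x + ny • (1 : A)) :
    (∀ K : A, SqrtNegOne K → ∀ r s : ℝ,
      Δ (r • (1 : A) + s • K) ∈ Submodule.span ℝ ({1, K} : Set A)) ∧
    (∀ K : A, SqrtNegOne K → ∀ r s : ℝ,
      Δ (r • (1 : A) + s • K)
        = (((r : ℂ) + s * Complex.I) ^ 2 - ty * ((r : ℂ) + s * Complex.I) + ny).re
              • (1 : A)
          + (((r : ℂ) + s * Complex.I) ^ 2 - ty * ((r : ℂ) + s * Complex.I) + ny).im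
              • K) ∧
    Differentiable ℂ (fun z : ℂ => z ^ 2 - (ty : ℂ) * z + (ny : ℂ)) ∧
    (∀ x : A, QCone x →
      (Δ x = 0 ↔ ∃ K : A, SqrtNegOne K ∧ x = ξ • (1 : A) + η • K)) := by
  have hsJ : star J = -J := star_sqrtNegOne hone hJ
  have hstar_y : star y = ξ • (1 : A) + (-η) • J := by
    rw [hyform, star_add, star_smul, star_smul, star_one, star_trivial (ξ : ℝ),
      star_trivial (η : ℝ), hsJ]
    module
  -- ty = 2ξ
  have hty' : ty = 2 * ξ := by
    refine (smul_one_inj hone ?_).symm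
    rw [← hty, hstar_y, hyform]
    module
  -- ny = ξ² + η²
  have hny' : ny = ξ ^ 2 + η ^ 2 := by
    refine (smul_one_inj hone ?_).symm
    rw [← hny, hstar_y, hyform, mul_expand hJ.2]
    rw [show (ξ ^ 2 + η ^ 2 : ℝ) = ξ * ξ - η * -η by ring]
    rw [show (ξ * -η + η * ξ : ℝ) = 0 by ring]
    simp
  -- complex re and im
  have hre : ∀ r s : ℝ,
      (((r : ℂ) + s * Complex.I) ^ 2 - ty * ((r : ℂ) + s * Complex.I) + ny).re
        = r * r - s * s - ty * r + ny := by
    intro r s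
    simp [pow_two, Complex.mul_re, Complex.mul_im] <;> ring
  have him : ∀ r s : ℝ,
      (((r : ℂ) + s * Complex.I) ^ 2 - ty * ((r : ℂ) + s * Complex.I) + ny).im
        = 2 * r * s - ty * s := by
    intro r s
    simp [pow_two, Complex.mul_re, Complex.mul_im] <;> ring
  refine ⟨?_, ?_, ?_, ?_⟩
  · intro K hK r s
    rw [delta_val hK.2 ty ny Δ hΔ]
    exact Submodule.add_mem _
      (Submodule.smul_mem _ _ (Submodule.subset_span (by simp)))
      (Submodule.smul_mem _ _ (Submodule.subset_span (by simp)))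
  · intro K hK r s
    rw [delta_val hK.2 ty ny Δ hΔ, hre, him]
  · fun_prop
  · intro x hx
    constructor
    · intro h0
      obtain ⟨r, s, K, hs0, hK, hxd⟩ := qcone_decomp hone hx hJ
      rw [hxd, delta_val hK.2 ty ny Δ hΔ] at h0
      obtain ⟨ha, hb⟩ := indep hone hK.2 h0
      rw [hty', hny'] at ha
      rw [hty'] at hb
      by_cases hs : s = 0
      · subst hs
        have hsum : (r - ξ) ^ 2 + η ^ 2 = 0 := by nlinarith
        have hr : r = ξ := by nlinarith [sq_nonneg (r - ξ), sq_nonneg η]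
        have hη0 : η = 0 := by nlinarith [sq_nonneg (r - ξ), sq_nonneg η]
        exact ⟨K, hK, by rw [hxd, hr, hη0]⟩
      · have hr : r = ξ := by
          have hprod : (2 * s) * (r - ξ) = 0 := by linear_combination hb
          rcases mul_eq_zero.mp hprod with h | h
          · exact absurd (by linarith) hs
          · linarith
        subst hr
        have hsη : s = η := by
          have hsq : s ^ 2 = η ^ 2 := by linear_combination -ha
          have habs : |s| = |η| := by
            rw [← Real.sqrt_sq_eq_abs, ← Real.sqrt_sq_eq_abs, hsq]
          rwa [abs_of_nonneg hs0, abs_of_nonneg hη] at habs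
        exact ⟨K, hK, by rw [hxd, hsη]⟩
    · rintro ⟨K, hK, rfl⟩
      rw [delta_val hK.2 ty ny Δ hΔ, hty', hny']
      rw [show (ξ * ξ - η * η - 2 * ξ * ξ + (ξ ^ 2 + η ^ 2) : ℝ) = 0 by ring]
      rw [show (2 * ξ * η - 2 * ξ * η : ℝ) = 0 by ring]
      simp
end
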